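/- Let n, e, k be nonnegative integers with k² ≤ e ≤ k(k+1) and n ≥ 2k+1. Set β = e − k² and α = k − β. Then the code consisting of n − 2k − 1 zeros, followed by any word with α copies of a = 01 and β copies of b = 10, followed by one final (rightmost) digit, encodes a threshold graph on n vertices with exactly e edges. -/

import Mathlib

/-!
Common definitions: threshold graphs from binary codes, counts of matchings and
independent sets, lex and colex graphs, and almost alternating codes.

A binary code is a `List Bool` whose head is the *leftmost* (most significant,
last added) digit; `true` stands for the digit `1` and `false` for `0`.
Reading the code from right to left, each digit adds a vertex: a `1` adds a
dominating vertex and a `0` adds an isolated vertex.  Equivalently, the vertex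
at position `i` (from the left) is adjacent to every vertex to its right iff
its digit is `1`.  Note that the value of the rightmost digit (the star) never
affects the graph.
-/

/-- The threshold graph encoded by a binary code `σ`. -/
def threshOf (σ : List Bool) : SimpleGraph (Fin σ.length) where
  Adj i j := i ≠ j ∧ σ.get (min i j) = true
  symm := by
    constructor
    intro i j h
    refine ⟨h.1.symm, ?_⟩
    rw [min_comm]
    exact h.2
  loopless := by
    constructor
    intro i h
    exact h.1 rfl

/-- The number of edges of a graph. -/
noncomputable def edgeCount {V : Type*} (G : SimpleGraph V) : ℕ := Nat.card G.edgeSet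

/-- `M` is a matching of `G`: a set of pairwise disjoint edges of `G`. -/
def IsMatchingSet {V : Type*} (G : SimpleGraph V) (M : Finset (Sym2 V)) : Prop :=
  (∀ e ∈ M, e ∈ G.edgeSet) ∧ ∀ e ∈ M, ∀ f ∈ M, e ≠ f → ∀ v : V, v ∈ e → v ∉ f

/-- `m(G)`: the total number of matchings of `G` (including the empty matching). -/
noncomputable def matchCount {V : Type*} (G : SimpleGraph V) : ℕ :=
  Nat.card {M : Finset (Sym2 V) // IsMatchingSet G M}

/-- `m_k(G)`: the number of matchings of `G` of size `k`. -/
noncomputable def matchCountK {V : Type*} (G : SimpleGraph V) (k : ℕ) : ℕ :=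
  Nat.card {M : Finset (Sym2 V) // IsMatchingSet G M ∧ M.card = k}

/-- `i(G)`: the number of independent sets of `G` (including the empty set). -/
noncomputable def indCount {V : Type*} (G : SimpleGraph V) : ℕ :=
  Nat.card {S : Finset V // ∀ u ∈ S, ∀ v ∈ S, ¬ G.Adj u v}

/-- `i_k(G)`: the number of independent sets of `G` of size `k`. -/
noncomputable def indCountK {V : Type*} (G : SimpleGraph V) (k : ℕ) : ℕ :=
  Nat.card {S : Finset V // (∀ u ∈ S, ∀ v ∈ S, ¬ G.Adj u v) ∧ S.card = k}

/-- Two codes encode the same threshold graph: they have the same length and agree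
except possibly in the rightmost (starred) digit. -/
def CodeEquiv (σ τ : List Bool) : Prop := σ.length = τ.length ∧ σ.dropLast = τ.dropLast

/-- Words that are concatenations of copies of the letters `a = 01` and `b = 10`. -/
inductive IsABWord : List Bool → Prop
  | nil : IsABWord []
  | a {w : List Bool} : IsABWord w → IsABWord (false :: true :: w)
  | b {w : List Bool} : IsABWord w → IsABWord (true :: false :: w)

/-- `w` is a concatenation of `α` copies of the letter `a = 01` and `β` copies of the
letter `b = 10`, in some order. -/
def IsABWordWith (α β : ℕ) (w : List Bool) : Prop :=
  ∃ ls : List (List Bool), (∀ x ∈ ls, x = [false, true] ∨ x = [true, false]) ∧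
    ls.count [false, true] = α ∧ ls.count [true, false] = β ∧ w = ls.flatten

/-- A code is almost alternating if (possibly after reinterpreting the starred rightmost
digit) it is an initial constant block followed by a word in the letters `a = 01` and
`b = 10`, either using the rightmost digit as the final digit of the last letter
(unstarred case) or keeping the rightmost digit separate after the word (starred case). -/
def IsAlmostAltCode (σ : List Bool) : Prop :=
  ∃ τ : List Bool, CodeEquiv σ τ ∧
    ∃ (t : ℕ) (c : Bool) (w : List Bool), IsABWord w ∧
      (τ = List.replicate t c ++ w ∨ ∃ d : Bool, τ = List.replicate t c ++ w ++ [d])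

/-- A small almost alternating code: the initial block consists of `0`'s (or is empty). -/
def IsSmallAACode (σ : List Bool) : Prop :=
  ∃ τ : List Bool, CodeEquiv σ τ ∧
    ∃ (t : ℕ) (w : List Bool), IsABWord w ∧
      (τ = List.replicate t false ++ w ∨ ∃ d : Bool, τ = List.replicate t false ++ w ++ [d])

/-- A large almost alternating code: the initial block is a nonempty block of `1`'s. -/
def IsLargeAACode (σ : List Bool) : Prop :=
  ∃ τ : List Bool, CodeEquiv σ τ ∧
    ∃ (t : ℕ) (w : List Bool), 1 ≤ t ∧ IsABWord w ∧
      (τ = List.replicate t true ++ w ∨ ∃ d : Bool, τ = List.replicate t true ++ w ++ [d])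

/-- A code has a bracketed string if (possibly after reinterpreting the starred rightmost
digit) it contains a substring `1 0^j 1` or `0 1^j 0` with `j ≥ 3`. -/
def HasBracketedString (σ : List Bool) : Prop :=
  ∃ τ : List Bool, CodeEquiv σ τ ∧ ∃ (x y : List Bool) (j : ℕ), 3 ≤ j ∧
    (τ = x ++ [true] ++ List.replicate j false ++ [true] ++ y ∨
     τ = x ++ [false] ++ List.replicate j true ++ [false] ++ y)

/-- A code has a separation issue if it contains two pairs of repeated digits separated by
a substring of odd length, where the first pair is immediately preceded by the opposite
digit and the second pair is followed by at least one further digit. -/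
def HasSeparationIssue (σ : List Bool) : Prop :=
  ∃ (x m y : List Bool) (d c : Bool),
    Odd m.length ∧ y ≠ [] ∧ σ = x ++ [!d, d, d] ++ m ++ [c, c] ++ y

/-- The colex graph `C(n,e)`: the graph on `Fin n` whose edges are the first `e` pairs in
the colexicographic order.  The pair `{i, j}` with `i < j` has rank `j(j-1)/2 + i` in
this order. -/
def colexGraph (n e : ℕ) : SimpleGraph (Fin n) where
  Adj i j := i ≠ j ∧ max i.val j.val * (max i.val j.val - 1) / 2 + min i.val j.val < e
  symm := by
    constructor
    intro i j h
    refine ⟨h.1.symm, ?_⟩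
    rw [max_comm j.val i.val, min_comm j.val i.val]
    exact h.2
  loopless := by
    constructor
    intro i h
    exact h.1 rfl

/-- The lex graph `L(n,e)`: the graph on `Fin n` whose edges are the first `e` pairs in
the lexicographic order.  The pair `{i, j}` with `i < j` has rank
`i(n-1) - i(i-1)/2 + (j - i - 1)` in this order. -/
def lexGraph (n e : ℕ) : SimpleGraph (Fin n) where
  Adj i j := i ≠ j ∧
    min i.val j.val * (n - 1) - min i.val j.val * (min i.val j.val - 1) / 2
      + (max i.val j.val - min i.val j.val - 1) < e
  symm := by
    constructor
    intro i j h
    refine ⟨h.1.symm, ?_⟩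
    rw [max_comm j.val i.val, min_comm j.val i.val]
    exact h.2
  loopless := by
    constructor
    intro i h
    exact h.1 rfl

/-!
A `1` at position `i` of a code of length `m` contributes the `m - 1 - i` edges joining it to the
vertices on its right, and a `0` contributes nothing. In the word of `k` letters followed by the
star, the `1` of the `j`-th letter from the right sees `2j - 1` digits after it if the letter is
`a = 01` and `2j` if it is `b = 10`. Summing gives `k² + β = e`.
-/

def codeEdgeCount : List Bool → ℕ
  | [] => 0
  | c :: σ => (if c then σ.length else 0) + codeEdgeCount σ

lemma threshOf_adj_iff_of_le {σ : List Bool} {i j : Fin σ.length} (hij : i ≤ j) :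
    (threshOf σ).Adj i j ↔ i < j ∧ σ.get i = true := by
  change i ≠ j ∧ σ.get (min i j) = true ↔ _
  rw [min_eq_left hij, lt_iff_le_and_ne]
  simp [hij]

lemma edgeCount_threshOf_eq_sum (σ : List Bool) :
    edgeCount (threshOf σ) =
      ∑ i : Fin σ.length, if σ.get i = true then σ.length - 1 - i else 0 := by
  classical
  have hsort : (threshOf σ).edgeSet ≃
      {p : Fin σ.length × Fin σ.length // p.1 ≤ p.2 ∧ (threshOf σ).Adj p.1 p.2} := by
    refine (Equiv.subtypeEquiv Sym2.sortEquiv fun s => ?_).trans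
      (Equiv.subtypeSubtypeEquivSubtypeInter _ _)
    induction s using Sym2.ind with
    | _ a b =>
      rcases le_total a b with h | h
      · simp [min_eq_left h, max_eq_right h]
      · simp [min_eq_right h, max_eq_left h, (threshOf σ).adj_comm a b]
  rw [edgeCount, Nat.card_congr hsort, Nat.card_eq_fintype_card, Fintype.card_subtype,
    Finset.card_filter, Fintype.sum_prod_type]
  refine Finset.sum_congr rfl fun i _ => ?_
  have hrow : ∀ j, (i ≤ j ∧ (threshOf σ).Adj i j) ↔ (σ.get i = true ∧ i < j) := fun j =>
    ⟨fun ⟨hij, hadj⟩ => ((threshOf_adj_iff_of_le hij).1 hadj).symm,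
      fun ⟨hi, hij⟩ => ⟨hij.le, (threshOf_adj_iff_of_le hij.le).2 ⟨hij, hi⟩⟩⟩
  simp only [hrow]
  split_ifs with hi
  · simp only [hi, true_and, Finset.sum_boole, Nat.cast_id]
    rw [← Fin.card_Ioi]
    congr 1
    ext j
    simp
  · simp only [hi, Bool.false_eq_true, false_and, if_false, Finset.sum_const_zero]

lemma codeEdgeCount_eq_sum (σ : List Bool) :
    codeEdgeCount σ = ∑ i : Fin σ.length, if σ.get i = true then σ.length - 1 - i else 0 := by
  induction σ with
  | nil => rfl
  | cons c σ ih =>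
    change _ = ∑ i : Fin (σ.length + 1), _
    rw [Fin.sum_univ_succ, codeEdgeCount, ih]
    simp [Nat.sub_sub, Nat.add_comm]

lemma edgeCount_threshOf (σ : List Bool) : edgeCount (threshOf σ) = codeEdgeCount σ := by
  rw [edgeCount_threshOf_eq_sum, codeEdgeCount_eq_sum]

lemma codeEdgeCount_replicate_false_append (t : ℕ) (σ : List Bool) :
    codeEdgeCount (List.replicate t false ++ σ) = codeEdgeCount σ := by
  induction t with
  | zero => rfl
  | succ t ih => simp [List.replicate_succ, codeEdgeCount, ih]

section Letters

variable {ls : List (List Bool)} (hls : ∀ x ∈ ls, x = [false, true] ∨ x = [true, false])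
include hls

lemma length_eq_count_a_add_count_b :
    ls.length = ls.count [false, true] + ls.count [true, false] := by
  induction ls with
  | nil => rfl
  | cons x ls ih =>
    rw [List.forall_mem_cons] at hls
    rcases hls.1 with rfl | rfl <;> simp [ih hls.2] <;> omega

lemma length_flatten_letters : ls.flatten.length = 2 * ls.length := by
  induction ls with
  | nil => rfl
  | cons x ls ih =>
    rw [List.forall_mem_cons] at hls
    rcases hls.1 with rfl | rfl <;> simp [ih hls.2] <;> omega

lemma codeEdgeCount_flatten_letters_append_singleton (d : Bool) :
    codeEdgeCount (ls.flatten ++ [d]) = ls.length ^ 2 + ls.count [true, false] := by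
  induction ls with
  | nil => simp [codeEdgeCount]
  | cons x ls ih =>
    rw [List.forall_mem_cons] at hls
    have hlen := length_flatten_letters hls.2
    rcases hls.1 with rfl | rfl <;>
      simp [codeEdgeCount, ih hls.2, hlen] <;> ring

end Letters

/-- If `k² ≤ e ≤ k(k+1)` and `n ≥ 2k+1`, then with `β = e − k²` and
`α = k − β`, the code made of `n − 2k − 1` zeros, followed by any word with `α` copies
of `a = 01` and `β` copies of `b = 10`, followed by one final (rightmost) digit,
encodes a threshold graph on `n` vertices with exactly `e` edges. -/
theorem starred_code_realizes (n e k : ℕ) (h1 : k ^ 2 ≤ e) (h2 : e ≤ k * (k + 1))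
    (h3 : 2 * k + 1 ≤ n) (w : List Bool) (d : Bool)
    (hw : IsABWordWith (k - (e - k ^ 2)) (e - k ^ 2) w) :
    (List.replicate (n - 2 * k - 1) false ++ w ++ [d]).length = n ∧
      edgeCount (threshOf (List.replicate (n - 2 * k - 1) false ++ w ++ [d])) = e := by
  obtain ⟨ls, hls, hα, hβ, rfl⟩ := hw
  have hk : ls.length = k := by
    have hsq : k * (k + 1) = k ^ 2 + k := by ring
    rw [length_eq_count_a_add_count_b hls, hα, hβ]
    omega
  constructor
  · simp only [List.length_append, List.length_replicate, List.length_singleton,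
      length_flatten_letters hls, hk]
    omega
  · rw [List.append_assoc, edgeCount_threshOf, codeEdgeCount_replicate_false_append,
      codeEdgeCount_flatten_letters_append_singleton hls, hk, hβ]
    omega
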